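/- arXiv:1509.08605 — 3 statements merged into one kernel-verified Lean document; each statement's English description precedes it below -/
import Mathlib

section
/- For every μ-recursive k-ary partial function f on the natural numbers, there exists a first-order arithmetic formula p (in a language with natural number constants, successor, addition, comparison, and quantification over finite sequences of naturals) with free variables r, x₁, ..., x_k such that f(a₁,...,a_k) = z holds if and only if p is true under the assignment r ↦ z, x₁ ↦ a₁, ..., x_k ↦ a_k. -/
/-!
By induction on the basis `Nat.Partrec'`, the graph of every μ-recursive function is defined by
a formula. Composition guesses the vector of intermediate values as a single sequence. Primitive
recursion guesses the whole trace of the recursion as a sequence and checks it step by step under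
a bounded universal quantifier; quantifying over sequences is what replaces Gödel's β-function,
so no multiplication is needed. Minimization says that the function vanishes at the value and at
no smaller argument.
-/

/-- Terms of weak second-order arithmetic with `k` number variables and
`m` sequence variables: constants, successor, addition, sequence length
and sequence indexing. -/
inductive Term : ℕ → ℕ → Type
  | var {k m : ℕ} : Fin k → Term k m
  | const {k m : ℕ} : ℕ → Term k m
  | succ {k m : ℕ} : Term k m → Term k m
  | add {k m : ℕ} : Term k m → Term k m → Term k m
  | len {k m : ℕ} : Fin m → Term k m
  | idx {k m : ℕ} : Fin m → Term k m → Term k m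

def Term.eval : ∀ {k m : ℕ}, Term k m → (Fin k → ℕ) → (Fin m → List ℕ) → ℕ
  | _, _, .var i, v, _ => v i
  | _, _, .const n, _, _ => n
  | _, _, .succ t, v, w => t.eval v w + 1
  | _, _, .add t₁ t₂, v, w => t₁.eval v w + t₂.eval v w
  | _, _, .len j, _, w => (w j).length
  | _, _, .idx j t, v, w => (w j).getD (t.eval v w) 0

/-- Formulas of weak second-order arithmetic: equality, comparison, boolean
connectives, quantification over naturals and over finite sequences of naturals. -/
inductive Formula : ℕ → ℕ → Type
  | eq {k m : ℕ} : Term k m → Term k m → Formula k m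
  | lt {k m : ℕ} : Term k m → Term k m → Formula k m
  | not {k m : ℕ} : Formula k m → Formula k m
  | and {k m : ℕ} : Formula k m → Formula k m → Formula k m
  | exN {k m : ℕ} : Formula (k + 1) m → Formula k m
  | exS {k m : ℕ} : Formula k (m + 1) → Formula k m

def Formula.Eval : ∀ {k m : ℕ}, Formula k m → (Fin k → ℕ) → (Fin m → List ℕ) → Prop
  | _, _, .eq t₁ t₂, v, w => t₁.eval v w = t₂.eval v w
  | _, _, .lt t₁ t₂, v, w => t₁.eval v w < t₂.eval v w
  | _, _, .not φ, v, w => ¬ φ.Eval v w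
  | _, _, .and φ ψ, v, w => φ.Eval v w ∧ ψ.Eval v w
  | _, _, .exN φ, v, w => ∃ a : ℕ, φ.Eval (Fin.cons a v) w
  | _, _, .exS φ, v, w => ∃ s : List ℕ, φ.Eval v (Fin.cons s w)

def Term.subst {k m k' m' : ℕ} (σ : Fin k → Term k' m') (τ : Fin m → Fin m') :
    Term k m → Term k' m'
  | .var i => σ i
  | .const n => .const n
  | .succ t => .succ (t.subst σ τ)
  | .add t₁ t₂ => .add (t₁.subst σ τ) (t₂.subst σ τ)
  | .len j => .len (τ j)
  | .idx j t => .idx (τ j) (t.subst σ τ)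

@[simp]
theorem Term.eval_subst {k m k' m' : ℕ} (σ : Fin k → Term k' m') (τ : Fin m → Fin m')
    (t : Term k m) (v : Fin k' → ℕ) (w : Fin m' → List ℕ) :
    (t.subst σ τ).eval v w = t.eval ((Term.eval · v w) ∘ σ) (w ∘ τ) := by
  induction t <;> simp [Term.subst, Term.eval, *]

def Formula.subst :
    ∀ {k m k' m' : ℕ}, Formula k m → (Fin k → Term k' m') → (Fin m → Fin m') → Formula k' m'
  | _, _, _, _, .eq t₁ t₂, σ, τ => .eq (t₁.subst σ τ) (t₂.subst σ τ)
  | _, _, _, _, .lt t₁ t₂, σ, τ => .lt (t₁.subst σ τ) (t₂.subst σ τ)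
  | _, _, _, _, .not φ, σ, τ => .not (φ.subst σ τ)
  | _, _, _, _, .and φ ψ, σ, τ => .and (φ.subst σ τ) (ψ.subst σ τ)
  | _, _, _, _, .exN φ, σ, τ =>
      .exN (φ.subst (Fin.cons (.var 0) fun i => (σ i).subst (fun j => .var j.succ) id) τ)
  | _, _, _, _, .exS φ, σ, τ =>
      .exS (φ.subst (fun i => (σ i).subst .var Fin.succ) (Fin.cons 0 fun j => (τ j).succ))

theorem Formula.eval_subst : ∀ {k m k' m' : ℕ} (φ : Formula k m) (σ : Fin k → Term k' m')
    (τ : Fin m → Fin m') (v : Fin k' → ℕ) (w : Fin m' → List ℕ),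
    (φ.subst σ τ).Eval v w ↔ φ.Eval ((Term.eval · v w) ∘ σ) (w ∘ τ)
  | _, _, _, _, .eq _ _, _, _, _, _ | _, _, _, _, .lt _ _, _, _, _, _ => by
      simp [Formula.subst, Formula.Eval]
  | _, _, _, _, .not φ, σ, τ, v, w => by
      simp [Formula.subst, Formula.Eval, Formula.eval_subst φ]
  | _, _, _, _, .and φ ψ, σ, τ, v, w => by
      simp [Formula.subst, Formula.Eval, Formula.eval_subst φ, Formula.eval_subst ψ]
  | _, _, _, _, .exN φ, σ, τ, v, w => by
      simp only [Formula.subst, Formula.Eval, Formula.eval_subst φ, Fin.comp_cons]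
      refine exists_congr fun a => iff_of_eq ?_
      congr 1
      simp [Function.comp_def, Term.eval]
  | _, _, _, _, .exS φ, σ, τ, v, w => by
      simp only [Formula.subst, Formula.Eval, Formula.eval_subst φ, Fin.comp_cons]
      refine exists_congr fun s => iff_of_eq ?_
      congr 1
      simp [Function.comp_def, Term.eval]

def Definable {n m : ℕ} (R : (Fin n → ℕ) → (Fin m → List ℕ) → Prop) : Prop :=
  ∃ p : Formula n m, ∀ v w, p.Eval v w ↔ R v w

namespace Definable

variable {n m : ℕ} {R S : (Fin n → ℕ) → (Fin m → List ℕ) → Prop}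

theorem of_iff (h : Definable R) (e : ∀ v w, R v w ↔ S v w) : Definable S :=
  let ⟨p, hp⟩ := h
  ⟨p, fun v w => (hp v w).trans (e v w)⟩

theorem eq (t₁ t₂ : Term n m) : Definable fun v w => t₁.eval v w = t₂.eval v w :=
  ⟨.eq t₁ t₂, fun _ _ => Iff.rfl⟩

theorem lt (t₁ t₂ : Term n m) : Definable fun v w => t₁.eval v w < t₂.eval v w :=
  ⟨.lt t₁ t₂, fun _ _ => Iff.rfl⟩

theorem not (h : Definable R) : Definable fun v w => ¬R v w :=
  let ⟨p, hp⟩ := h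
  ⟨.not p, fun v w => not_congr (hp v w)⟩

theorem and (hR : Definable R) (hS : Definable S) : Definable fun v w => R v w ∧ S v w :=
  let ⟨p, hp⟩ := hR
  let ⟨q, hq⟩ := hS
  ⟨.and p q, fun v w => and_congr (hp v w) (hq v w)⟩

theorem exists_nat {R : (Fin (n + 1) → ℕ) → (Fin m → List ℕ) → Prop} (h : Definable R) :
    Definable fun v w => ∃ a, R (Fin.cons a v) w :=
  let ⟨p, hp⟩ := h
  ⟨.exN p, fun v w => exists_congr fun a => hp (Fin.cons a v) w⟩

theorem exists_list {R : (Fin n → ℕ) → (Fin (m + 1) → List ℕ) → Prop} (h : Definable R) :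
    Definable fun v w => ∃ s, R v (Fin.cons s w) :=
  let ⟨p, hp⟩ := h
  ⟨.exS p, fun v w => exists_congr fun s => hp v (Fin.cons s w)⟩

theorem subst {n' m' : ℕ} (h : Definable R) (σ : Fin n → Term n' m') (τ : Fin m → Fin m') :
    Definable fun v w => R ((Term.eval · v w) ∘ σ) (w ∘ τ) :=
  let ⟨p, hp⟩ := h
  ⟨p.subst σ τ, fun v w => (p.eval_subst σ τ v w).trans (hp _ _)⟩

theorem forall_fin {j : ℕ} {R : Fin j → (Fin n → ℕ) → (Fin m → List ℕ) → Prop}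
    (h : ∀ i, Definable (R i)) : Definable fun v w => ∀ i, R i v w := by
  induction j with
  | zero => exact (eq (.const 0) (.const 0)).of_iff fun _ _ => by simp [Term.eval]
  | succ j ih =>
    exact ((h 0).and (ih fun i => h i.succ)).of_iff fun v w =>
      (Fin.forall_fin_succ (P := fun i => R i v w)).symm

theorem forall_lt {R : (Fin (n + 1) → ℕ) → (Fin m → List ℕ) → Prop} (h : Definable R)
    (j : Fin n) : Definable fun v w => ∀ y < v j, R (Fin.cons y v) w :=
  ((lt (.var 0) (.var j.succ)).and h.not).exists_nat.not.of_iff fun _ _ => by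
    simp [Term.eval]

end Definable

theorem List.Vector.mem_mOfFn_iff {α : Type*} :
    ∀ {n : ℕ} {g : Fin n → Part α} {ys : List.Vector α n},
      ys ∈ List.Vector.mOfFn g ↔ ∀ i, ys.get i ∈ g i
  | 0, g, ys => by simp [List.Vector.mOfFn, pure, List.Vector.eq_nil ys]
  | n + 1, g, ys => by
      obtain ⟨a, ys, rfl⟩ := ys.exists_eq_cons
      simp [List.Vector.mOfFn, pure, Part.mem_bind_iff, Fin.forall_fin_succ,
        List.Vector.eq_cons_iff, List.Vector.mem_mOfFn_iff]

theorem List.Vector.exists_iff_exists_list_getD {α : Type*} {n : ℕ} (d : α)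
    {P : List.Vector α n → Prop} :
    (∃ ys, P ys) ↔ ∃ s : List α, P (List.Vector.ofFn fun i => s.getD i d) := by
  refine ⟨fun ⟨ys, h⟩ => ⟨ys.toList, ?_⟩, fun ⟨s, h⟩ => ⟨_, h⟩⟩
  convert h
  ext i
  simp [List.Vector.get_eq_get_toList]

theorem Nat.rec_eq_iff_exists_trace {α : Type*} (d x : α) (g : ℕ → α → α) (a : ℕ) (z : α) :
    z = Nat.rec (motive := fun _ => α) x g a ↔
      ∃ s : List α, s.getD 0 d = x ∧ (∀ y < a, s.getD (y + 1) d = g y (s.getD y d)) ∧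
        z = s.getD a d := by
  set F : ℕ → α := fun y => Nat.rec (motive := fun _ => α) x g y
  constructor
  · rintro rfl
    have trace_getD : ∀ y ≤ a, ((List.range (a + 1)).map F).getD y d = F y := fun y hy => by
      simp [List.getD_eq_getElem?_getD, Nat.lt_succ_of_le hy]
    refine ⟨(List.range (a + 1)).map F, trace_getD 0 (Nat.zero_le a), fun y hy => ?_,
      (trace_getD a le_rfl).symm⟩
    rw [trace_getD _ hy, trace_getD _ hy.le]
  · rintro ⟨s, h₀, hstep, rfl⟩
    suffices ∀ y ≤ a, s.getD y d = F y from this a le_rfl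
    intro y hy
    induction y with
    | zero => exact h₀
    | succ y ih => rw [hstep y hy, ih (Nat.le_of_succ_le hy)]

def GraphDefinable {n : ℕ} (f : List.Vector ℕ n →. ℕ) : Prop :=
  Definable fun (v : Fin (n + 1) → ℕ) (_ : Fin 0 → List ℕ) =>
    v 0 ∈ f (List.Vector.ofFn (Fin.tail v))

namespace GraphDefinable

theorem comp {m n : ℕ} {f : List.Vector ℕ n →. ℕ} {g : Fin n → List.Vector ℕ m →. ℕ}
    (hf : GraphDefinable f) (hg : ∀ i, GraphDefinable (g i)) :
    GraphDefinable fun a => (List.Vector.mOfFn fun i => g i a).bind f := by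
  have hg' := Definable.forall_fin fun i =>
    (hg i).subst (n' := m + 1) (m' := 1) (Fin.cons (.idx 0 (.const i)) (.var ∘ Fin.succ))
      Fin.elim0
  have hf' := hf.subst (n' := m + 1) (m' := 1) (Fin.cons (.var 0) fun i => .idx 0 (.const i))
    Fin.elim0
  refine (hg'.and hf').exists_list.of_iff fun v w => ?_
  simp only [Fin.comp_cons, Fin.cons_zero, Fin.tail_cons]
  refine Iff.trans ?_ Part.mem_bind_iff.symm
  simp [Function.comp_def, Term.eval, Fin.tail_def,
    List.Vector.mem_mOfFn_iff, List.Vector.exists_iff_exists_list_getD 0]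

theorem prec {n : ℕ} {f : List.Vector ℕ n → ℕ} {g : List.Vector ℕ (n + 2) → ℕ}
    (hf : GraphDefinable (n := n) f) (hg : GraphDefinable (n := n + 2) g) :
    GraphDefinable (n := n + 1) fun v =>
      v.head.rec (motive := fun _ => ℕ) (f v.tail) fun y IH => g (y ::ᵥ IH ::ᵥ v.tail) := by
  have hf' := hf.subst (n' := n + 2) (m' := 1)
    (Fin.cons (.idx 0 (.const 0)) (.var ∘ Fin.succ ∘ Fin.succ)) Fin.elim0
  have hg' := (hg.subst (n' := n + 3) (m' := 1)
    (Fin.cons (.idx 0 (.succ (.var 0))) <| Fin.cons (.var 0) <| Fin.cons (.idx 0 (.var 0)) <|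
      .var ∘ Fin.succ ∘ Fin.succ ∘ Fin.succ) Fin.elim0).forall_lt 1
  have hresult := Definable.eq (n := n + 2) (m := 1) (.var 0) (.idx 0 (.var 1))
  refine (hf'.and (hg'.and hresult)).exists_list.of_iff fun v w => ?_
  simp only [Fin.comp_cons, Fin.cons_zero, Fin.tail_cons]
  simp [Function.comp_def, Term.eval, Fin.tail_def, List.Vector.ofFn,
    Nat.rec_eq_iff_exists_trace 0]

theorem rfind {n : ℕ} {f : List.Vector ℕ (n + 1) → ℕ} (hf : GraphDefinable (n := n + 1) f) :
    GraphDefinable fun v => Nat.rfind fun k => Part.some (f (k ::ᵥ v) = 0) := by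
  have hzero := hf.subst (n' := n + 1) (m' := 0) (Fin.cons (.const 0) .var) id
  have hmin := (hf.subst (n' := n + 2) (m' := 0)
    (Fin.cons (.const 0) <| Fin.cons (.var 0) <| .var ∘ Fin.succ ∘ Fin.succ) id).not
    |>.forall_lt 0
  refine (hzero.and hmin).of_iff fun v w => ?_
  simp only [Fin.comp_cons, Fin.cons_zero, Fin.tail_cons]
  refine Iff.trans ?_ Nat.mem_rfind.symm
  simp [Function.comp_def, Term.eval, Fin.tail_def, List.Vector.ofFn, eq_comm]

end GraphDefinable

theorem Nat.Primrec'.graphDefinable {n : ℕ} {f : List.Vector ℕ n → ℕ}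
    (hf : Nat.Primrec' f) : GraphDefinable (n := n) f := by
  induction hf with
  | zero => exact (Definable.eq (.var 0) (.const 0)).of_iff fun v w => by simp [Term.eval]
  | succ =>
    exact (Definable.eq (.var 0) (.succ (.var 1))).of_iff fun v w => by
      simp [Term.eval, List.Vector.ofFn, Fin.tail_def]
  | get i =>
    exact (Definable.eq (.var 0) (.var i.succ)).of_iff fun v w => by
      simp [Term.eval, Fin.tail_def]
  | @comp m n f g _ _ ihf ihg =>
    exact (ihf.comp ihg).of_iff fun v w => by
      simp [Part.bind_some _ (f : List.Vector ℕ n →. ℕ)]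
  | prec _ _ ihf ihg => exact GraphDefinable.prec ihf ihg

theorem Nat.Partrec'.graphDefinable {n : ℕ} {f : List.Vector ℕ n →. ℕ}
    (hf : Nat.Partrec' f) : GraphDefinable f := by
  induction hf with
  | prim hf => exact hf.graphDefinable
  | comp g _ _ ihf ihg => exact ihf.comp ihg
  | rfind _ ihf => exact ihf.rfind

/-- For every μ-recursive `k`-ary partial function `f` there is a formula `p`
with free variables `r, x₁, …, x_k` (variable `0` playing the role of `r`)
such that `f(a₁,…,a_k) = z` iff `p` is true at `r ↦ z, xᵢ ↦ aᵢ`. -/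
theorem mu_recursive_definable {k : ℕ} (f : List.Vector ℕ k →. ℕ)
    (hf : Nat.Partrec' f) :
    ∃ p : Formula (k + 1) 0,
      ∀ (a : List.Vector ℕ k) (z : ℕ),
        z ∈ f a ↔ p.Eval (Fin.cons z a.get) (fun j => j.elim0) := by
  obtain ⟨p, hp⟩ := hf.graphDefinable
  exact ⟨p, fun a z => by simp [hp]⟩
end

section
/- The tagged conjunction rule is sound: if ⊨ {p₁} s {tags ∧ q₁} and ⊨ {p₂} s {tags' ∧ q₂}, then ⊨ {p₁ ∧ p₂} s {(tags ∪ tags') ∧ (q₁ ∧ q₂)}. -/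
/-- The correctness tags. -/
inductive Tag | terminates | typesafe | failsafe

/-- Error outcomes: divergence `⊥`, type error, failure. -/
inductive Err | bot | typeerror | fail

/-- Tagged big-step semantics: `S none` selects normal final states of a
computation, `S (some tag)` selects the error outcomes of the corresponding
tag; `comps s σ` is the set of computations of `s` from `σ`.
`Msem S comps T s σ = ⋃ { S_tag(ρ) | ρ ∈ comps s σ, tag ∈ T ∪ {∅} }`. -/
def Msem {St Cmp Stm : Type*} (S : Option Tag → Cmp → Set (St ⊕ Err))
    (comps : Stm → St → Set Cmp) (T : Set Tag) (s : Stm) (σ : St) :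
    Set (St ⊕ Err) :=
  {o | ∃ ρ ∈ comps s σ, o ∈ S none ρ ∨ ∃ t ∈ T, o ∈ S (some t) ρ}

/-- Tagged semantics applied to a set of initial states. -/
def MsemSet {St Cmp Stm : Type*} (S : Option Tag → Cmp → Set (St ⊕ Err))
    (comps : Stm → St → Set Cmp) (T : Set Tag) (s : Stm) (P : Set St) :
    Set (St ⊕ Err) :=
  ⋃ σ ∈ P, Msem S comps T s σ

/-- A tagged Hoare triple `⊨ {P} s {T ∧ Q}`. -/
def TaggedValid {St Cmp Stm : Type*} (S : Option Tag → Cmp → Set (St ⊕ Err))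
    (comps : Stm → St → Set Cmp) (P : Set St) (s : Stm) (T : Set Tag)
    (Q : Set St) : Prop :=
  MsemSet S comps T s P ⊆ Sum.inl '' Q

/-- Soundness of the tagged conjunction rule: from `⊨ {p₁} s {tags ∧ q₁}` and
`⊨ {p₂} s {tags' ∧ q₂}` infer `⊨ {p₁ ∧ p₂} s {(tags ∪ tags') ∧ (q₁ ∧ q₂)}`.
The hypothesis `herr` states that tag selectors produce only error outcomes,
which are never elements of the denotation of any assertion. -/
theorem tagged_conjunction_sound {St Cmp Stm : Type*}
    (S : Option Tag → Cmp → Set (St ⊕ Err)) (comps : Stm → St → Set Cmp)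
    (herr : ∀ (t : Tag) (ρ : Cmp) (o : St ⊕ Err),
      o ∈ S (some t) ρ → ∃ e : Err, o = Sum.inr e)
    (s : Stm) (P₁ P₂ Q₁ Q₂ : Set St) (T T' : Set Tag)
    (h₁ : TaggedValid S comps P₁ s T Q₁)
    (h₂ : TaggedValid S comps P₂ s T' Q₂) :
    TaggedValid S comps (P₁ ∩ P₂) s (T ∪ T') (Q₁ ∩ Q₂) := by
  intro o ho
  simp only [MsemSet, Set.mem_iUnion] at ho
  obtain ⟨σ, ⟨hσ₁, hσ₂⟩, ρ, hρ, hcase⟩ := ho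
  rcases hcase with hnone | ⟨t, ht, hterr⟩
  · have m1 : o ∈ Sum.inl '' Q₁ := h₁ (by
      simp only [MsemSet, Set.mem_iUnion]
      exact ⟨σ, hσ₁, ρ, hρ, Or.inl hnone⟩)
    have m2 : o ∈ Sum.inl '' Q₂ := h₂ (by
      simp only [MsemSet, Set.mem_iUnion]
      exact ⟨σ, hσ₂, ρ, hρ, Or.inl hnone⟩)
    obtain ⟨q1, hq1, rfl⟩ := m1
    obtain ⟨q2, hq2, heq⟩ := m2
    exact ⟨q1, ⟨hq1, Sum.inl.inj heq ▸ hq2⟩, rfl⟩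
  · obtain ⟨e, rfl⟩ := herr t ρ o hterr
    rcases ht with ht | ht
    · have := h₁ (by
        simp only [MsemSet, Set.mem_iUnion]
        exact ⟨σ, hσ₁, ρ, hρ, Or.inr ⟨t, ht, hterr⟩⟩)
      obtain ⟨q, _, h⟩ := this
      exact absurd h (by simp)
    · have := h₂ (by
        simp only [MsemSet, Set.mem_iUnion]
        exact ⟨σ, hσ₂, ρ, hρ, Or.inr ⟨t, ht, hterr⟩⟩)
      obtain ⟨q, _, h⟩ := this
      exact absurd h (by simp)
end

section
/- In an operational semantics where the while-loop unfolds as ⟨while e do s done, σ⟩ → ⟨if e then (s; while e do s done) else null end, σ⟩, if ⊨ {p} e {p'}, ⊨ {p' ∧ bool(r, true)} s {p} (partial correctness), and every normal terminating execution of the loop ends via the false-branch, then every normal final state of ⟨while e do s done, σ⟩ with σ ⊨ p satisfies ∃b, p'[r := b] ∧ bool(b, false) ∧ r = null. -/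
/-- Normal terminating executions of `while e do s done`: the condition `e` is
evaluated first (big-step relation `evalE`, leaving its result in the result
variable `rvar`, possibly with side effects); if the result encodes `true` the
body `s` runs (big-step relation `evalS`) and the loop repeats; the loop exits
normally only via the false branch, setting `rvar := null`. -/
inductive LoopFinal {Var Obj : Type*} [DecidableEq Var]
    (evalE evalS : (Var → Obj) → (Var → Obj) → Prop)
    (boolP : Obj → Bool → Prop) (rvar : Var) (nullO : Obj) :
    (Var → Obj) → (Var → Obj) → Prop
  | exit {σ τ : Var → Obj} : evalE σ τ → boolP (τ rvar) false →
      LoopFinal evalE evalS boolP rvar nullO σ (Function.update τ rvar nullO)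
  | iter {σ τ σ' τ' : Var → Obj} : evalE σ τ → boolP (τ rvar) true →
      evalS τ σ' → LoopFinal evalE evalS boolP rvar nullO σ' τ' →
      LoopFinal evalE evalS boolP rvar nullO σ τ'

/-- Partial-correctness soundness for the while loop: if `⊨ {p} e {p'}` and
`⊨ {p' ∧ bool(r, true)} s {p}`, then every normal final state `τ` of the loop
from a `p`-state satisfies `∃ b, p'[r := b] ∧ bool(b, false) ∧ r = null`. -/
theorem loop_partial_correctness {Var Obj : Type*} [DecidableEq Var]
    (evalE evalS : (Var → Obj) → (Var → Obj) → Prop)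
    (boolP : Obj → Bool → Prop) (rvar : Var) (nullO : Obj)
    (p p' : (Var → Obj) → Prop)
    (hpe : ∀ σ τ : Var → Obj, p σ → evalE σ τ → p' τ)
    (hps : ∀ σ τ : Var → Obj, p' σ → boolP (σ rvar) true → evalS σ τ → p τ) :
    ∀ σ τ : Var → Obj, p σ →
      LoopFinal evalE evalS boolP rvar nullO σ τ →
      ∃ b : Obj, p' (Function.update τ rvar b) ∧ boolP b false ∧
        τ rvar = nullO := by
  intro σ τ hp hloop
  induction hloop with
  | @exit σ τ he hb =>
      refine ⟨τ rvar, ?_, hb, by simp [Function.update_self]⟩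
      have : Function.update (Function.update τ rvar nullO) rvar (τ rvar) = τ := by
        funext x; by_cases h : x = rvar <;> simp [Function.update, h]
      rw [this]; exact hpe _ _ hp he
  | @iter σ τ σ' τ' he hb hs _ ih =>
      exact ih (hps _ _ (hpe _ _ hp he) hb hs)
end
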